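/- arXiv:2106.02224 — 5 statements merged into one kernel-verified Lean document; each statement's English description precedes it below -/
import Mathlib

section
/- Let φ : (0,∞) → [0,∞) be a nonincreasing, right-continuous function with lim_{s→∞} φ(s) = 0. Assume there exist constants B₀ > 0 and δ₀ > 0 such that r·φ(s+r) ≤ B₀·φ(s)^{1+δ₀} for every s > 0 and every r ∈ [0,1]. Then there exists S∞ > 0 (depending on δ₀, B₀ and φ) such that φ(s) = 0 for all s ≥ S∞. -/
/-- De Giorgi iteration lemma: if `φ : (0,∞) → [0,∞)` is nonincreasing, right-continuous,
tends to `0` at infinity, and satisfies `r·φ(s+r) ≤ B₀·φ(s)^(1+δ₀)` for all `s > 0` and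
`r ∈ [0,1]`, then `φ` vanishes beyond some level `S∞ > 0`. -/
theorem deGiorgi_iteration (φ : ℝ → ℝ) (B₀ δ₀ : ℝ)
    (hB₀ : 0 < B₀) (hδ₀ : 0 < δ₀)
    (hnonneg : ∀ s : ℝ, 0 < s → 0 ≤ φ s)
    (hmono : ∀ s t : ℝ, 0 < s → s ≤ t → φ t ≤ φ s)
    (hrc : ∀ s : ℝ, 0 < s → ContinuousWithinAt φ (Set.Ici s) s)
    (hlim : Filter.Tendsto φ Filter.atTop (nhds 0))
    (hrec : ∀ s r : ℝ, 0 < s → 0 ≤ r → r ≤ 1 →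
      r * φ (s + r) ≤ B₀ * φ s ^ (1 + δ₀)) :
    ∃ S : ℝ, 0 < S ∧ ∀ s : ℝ, S ≤ s → φ s = 0 := by
  set L : ℝ := (1/2 : ℝ) ^ (1/δ₀ : ℝ) with hLdef
  have hL0 : 0 < L := Real.rpow_pos_of_pos (by norm_num) _
  have hL1 : L < 1 := Real.rpow_lt_one (by norm_num) (by norm_num) (by positivity)
  have hLδ : L ^ δ₀ = 1/2 := by
    rw [hLdef, ← Real.rpow_mul (by norm_num), one_div_mul_cancel hδ₀.ne',
      Real.rpow_one]
  set ε : ℝ := (L / B₀) ^ (1/δ₀ : ℝ) with hεdef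
  have hε0 : 0 < ε := Real.rpow_pos_of_pos (by positivity) _
  have hεδ : ε ^ δ₀ = L / B₀ := by
    rw [hεdef, ← Real.rpow_mul (by positivity), one_div_mul_cancel hδ₀.ne',
      Real.rpow_one]
  obtain ⟨s₀, hφs₀, hs₀⟩ :=
    ((hlim.eventually (gt_mem_nhds hε0)).and (Filter.eventually_gt_atTop 0)).exists
  set s : ℕ → ℝ := fun n => s₀ + 2 - 2 * (1/2 : ℝ) ^ n with hsdef
  have hstep : ∀ n : ℕ, s (n + 1) = s n + (1/2 : ℝ) ^ n := by
    intro n; simp only [hsdef, pow_succ]; ring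
  have hspos : ∀ n : ℕ, 0 < s n := by
    intro n
    have h1 : (1/2 : ℝ) ^ n ≤ 1 := pow_le_one₀ (by norm_num) (by norm_num)
    simp only [hsdef]; linarith
  have hsle : ∀ n : ℕ, s n ≤ s₀ + 2 := by
    intro n
    have : (0:ℝ) ≤ (1/2 : ℝ) ^ n := by positivity
    simp only [hsdef]; linarith
  have key : ∀ n : ℕ, φ (s n) ≤ ε * L ^ n := by
    intro n
    induction n with
    | zero =>
      have : s 0 = s₀ := by simp [hsdef]
      rw [this]; simpa using hφs₀.le
    | succ n ih =>
      have hrn0 : (0:ℝ) ≤ (1/2 : ℝ) ^ n := by positivity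
      have hrn1 : (1/2 : ℝ) ^ n ≤ 1 := pow_le_one₀ (by norm_num) (by norm_num)
      have h1 := hrec (s n) ((1/2 : ℝ) ^ n) (hspos n) hrn0 hrn1
      rw [← hstep n] at h1
      have hφn : 0 ≤ φ (s n) := hnonneg _ (hspos n)
      have h2 : φ (s n) ^ (1 + δ₀) ≤ (ε * L ^ n) ^ (1 + δ₀) :=
        Real.rpow_le_rpow hφn ih (by positivity)
      have h3 : (ε * L ^ n) ^ (1 + δ₀) = ε * (L / B₀) * (L ^ n * (1/2 : ℝ) ^ n) := by
        rw [Real.mul_rpow hε0.le (by positivity)]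
        have e1 : ε ^ (1 + δ₀ : ℝ) = ε * (L / B₀) := by
          rw [Real.rpow_add hε0, Real.rpow_one, hεδ]
        have e2 : (L ^ n : ℝ) ^ (1 + δ₀ : ℝ) = L ^ n * (1/2 : ℝ) ^ n := by
          rw [← Real.rpow_natCast L n, ← Real.rpow_mul hL0.le,
            mul_add, mul_one, Real.rpow_add hL0, Real.rpow_natCast,
            mul_comm (n:ℝ) δ₀, Real.rpow_mul hL0.le, hLδ, Real.rpow_natCast]
        rw [e1, e2]
      have h4 : (1/2 : ℝ) ^ n * φ (s (n+1)) ≤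
          (1/2 : ℝ) ^ n * (ε * L ^ (n+1)) := by
        calc (1/2 : ℝ) ^ n * φ (s (n+1)) ≤ B₀ * φ (s n) ^ (1 + δ₀) := h1
          _ ≤ B₀ * (ε * L ^ n) ^ (1 + δ₀) := by
              exact mul_le_mul_of_nonneg_left h2 hB₀.le
          _ = (1/2 : ℝ) ^ n * (ε * L ^ (n+1)) := by
              rw [h3]; field_simp; ring
      have hpow : (0:ℝ) < (1/2 : ℝ) ^ n := by positivity
      exact le_of_mul_le_mul_left h4 hpow
  have hS0 : 0 < s₀ + 2 := by linarith
  have hφS : φ (s₀ + 2) = 0 := by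
    have hle0 : φ (s₀ + 2) ≤ 0 := by
      have htend : Filter.Tendsto (fun n : ℕ => ε * L ^ n) Filter.atTop (nhds 0) := by
        have := (tendsto_pow_atTop_nhds_zero_of_lt_one hL0.le hL1).const_mul ε
        simpa using this
      refine ge_of_tendsto' htend fun n => ?_
      exact le_trans (hmono (s n) (s₀ + 2) (hspos n) (hsle n)) (key n)
    exact le_antisymm hle0 (hnonneg _ hS0)
  refine ⟨s₀ + 2, hS0, fun t ht => ?_⟩
  have h1 := hmono (s₀ + 2) t hS0 ht
  have h2 := hnonneg t (lt_of_lt_of_le hS0 ht)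
  linarith [hφS ▸ h1]
end

section
/- Let φ : (0,∞) → [0,∞) be a nonincreasing, right-continuous function, and let B₀ > 0, δ₀ > 0 be constants such that r·φ(s+r) ≤ B₀·φ(s)^{1+δ₀} for every s > 0 and every r ∈ [0,1]. If s₀ > 0 satisfies φ(s₀)^{δ₀} ≤ 1/(2B₀), then φ(s) = 0 for every s > s₀ + 1/(1 − 2^{−δ₀}). -/
/-!
In place of the levels `s_{j+1} = sup {s > s_j : φ s > φ s_j / 2}` one can take the explicit
levels `σ_j = s₀ + ∑_{i<j} 2^{-iδ₀}`: the recursive inequality at `σ_j` with step `r = 2^{-jδ₀}`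
gives `φ(σ_{j+1}) ≤ φ(σ_j) / 2` as long as `φ(σ_j)^{δ₀} ≤ r / (2B₀)`, and this smallness condition
propagates, so inductively `φ(σ_j)^{δ₀} ≤ 2^{-jδ₀} / (2B₀)`. The levels stay below
`s₀ + 1/(1 - 2^{-δ₀})`, so by monotonicity `φ(s)^{δ₀} ≤ 2^{-jδ₀} / (2B₀)` for every `j` whenever
`s` exceeds that bound, forcing `φ(s) = 0`.
-/

open Finset

def deGiorgiLevel (s₀ c : ℝ) (j : ℕ) : ℝ := s₀ + ∑ i ∈ range j, c ^ i

namespace deGiorgiLevel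

variable {s₀ c : ℝ}

theorem succ (j : ℕ) : deGiorgiLevel s₀ c (j + 1) = deGiorgiLevel s₀ c j + c ^ j := by
  simp only [deGiorgiLevel, sum_range_succ, add_assoc]

theorem pos (hs₀ : 0 < s₀) (hc : 0 ≤ c) (j : ℕ) : 0 < deGiorgiLevel s₀ c j :=
  add_pos_of_pos_of_nonneg hs₀ (sum_nonneg fun i _ => pow_nonneg hc i)

theorem le (hc₀ : 0 ≤ c) (hc₁ : c < 1) (j : ℕ) : deGiorgiLevel s₀ c j ≤ s₀ + 1 / (1 - c) := by
  have h := geom_sum_Ico_le_of_lt_one (m := 0) (n := j) hc₀ hc₁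
  rw [pow_zero, Nat.Ico_zero_eq_range] at h
  exact add_le_add_right h s₀

end deGiorgiLevel

section Iteration

variable {φ : ℝ → ℝ} {B δ : ℝ}

theorem apply_add_le_half (hB : 0 < B) (hδ : 0 ≤ δ) {s r : ℝ} (hφs : 0 ≤ φ s) (hr : 0 < r)
    (hrec : r * φ (s + r) ≤ B * φ s ^ (1 + δ)) (hs : φ s ^ δ ≤ r / (2 * B)) :
    φ (s + r) ≤ φ s / 2 := by
  refine le_of_mul_le_mul_left ?_ hr
  calc r * φ (s + r) ≤ B * φ s ^ (1 + δ) := hrec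
    _ = B * (φ s * φ s ^ δ) := by rw [Real.rpow_add' hφs (by linarith), Real.rpow_one]
    _ ≤ B * (φ s * (r / (2 * B))) := by gcongr
    _ = r * (φ s / 2) := by field_simp

theorem rpow_apply_deGiorgiLevel_le (hB : 0 < B) (hδ : 0 ≤ δ) {s₀ : ℝ} (hs₀ : 0 < s₀)
    (hnonneg : ∀ s, 0 < s → 0 ≤ φ s)
    (hrec : ∀ s r, 0 < s → 0 ≤ r → r ≤ 1 → r * φ (s + r) ≤ B * φ s ^ (1 + δ))
    (hstart : φ s₀ ^ δ ≤ 1 / (2 * B)) (j : ℕ) :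
    φ (deGiorgiLevel s₀ (2 ^ (-δ)) j) ^ δ ≤ ((2 : ℝ) ^ (-δ)) ^ j / (2 * B) := by
  set c : ℝ := 2 ^ (-δ) with hc
  have hc₀ : 0 < c := by positivity
  have hc₁ : c ≤ 1 := Real.rpow_le_one_of_one_le_of_nonpos one_le_two (neg_nonpos.2 hδ)
  induction j with
  | zero => simpa [deGiorgiLevel] using hstart
  | succ j ih =>
    set σ := deGiorgiLevel s₀ c j
    have hφσ : 0 ≤ φ σ := hnonneg σ (deGiorgiLevel.pos hs₀ hc₀.le j)
    have hhalf : φ (σ + c ^ j) ≤ φ σ / 2 :=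
      apply_add_le_half hB hδ hφσ (pow_pos hc₀ j)
        (hrec σ _ (deGiorgiLevel.pos hs₀ hc₀.le j) (pow_nonneg hc₀.le j) (pow_le_one₀ hc₀.le hc₁))
        ih
    have hφnext : 0 ≤ φ (σ + c ^ j) := by
      rw [← deGiorgiLevel.succ]; exact hnonneg _ (deGiorgiLevel.pos hs₀ hc₀.le _)
    rw [deGiorgiLevel.succ]
    calc φ (σ + c ^ j) ^ δ ≤ (φ σ / 2) ^ δ := Real.rpow_le_rpow hφnext hhalf hδ
      _ = φ σ ^ δ * c := by
        rw [Real.div_rpow hφσ zero_le_two, hc, Real.rpow_neg zero_le_two, div_eq_mul_inv]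
      _ ≤ c ^ j / (2 * B) * c := by gcongr
      _ = c ^ (j + 1) / (2 * B) := by ring

end Iteration

theorem deGiorgi_iteration_quantitative_general (φ : ℝ → ℝ) (B₀ δ₀ s₀ : ℝ)
    (hB₀ : 0 < B₀) (hδ₀ : 0 < δ₀) (hs₀ : 0 < s₀)
    (hnonneg : ∀ s : ℝ, 0 < s → 0 ≤ φ s)
    (hmono : ∀ s t : ℝ, 0 < s → s ≤ t → φ t ≤ φ s)
    (hrec : ∀ s r : ℝ, 0 < s → 0 ≤ r → r ≤ 1 →
      r * φ (s + r) ≤ B₀ * φ s ^ (1 + δ₀))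
    (hstart : φ s₀ ^ δ₀ ≤ 1 / (2 * B₀)) :
    ∀ s : ℝ, s₀ + 1 / (1 - (2 : ℝ) ^ (-δ₀)) < s → φ s = 0 := by
  intro s hs
  set c : ℝ := 2 ^ (-δ₀)
  have hc₀ : 0 < c := by positivity
  have hc₁ : c < 1 := Real.rpow_lt_one_of_one_lt_of_neg one_lt_two (neg_neg_of_pos hδ₀)
  have hφs : 0 ≤ φ s := hnonneg s (by linarith [one_div_pos.2 (sub_pos.2 hc₁)])
  have hbound : ∀ j, φ s ^ δ₀ ≤ c ^ j / (2 * B₀) := fun j =>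
    (Real.rpow_le_rpow hφs (hmono _ s (deGiorgiLevel.pos hs₀ hc₀.le j)
      ((deGiorgiLevel.le hc₀.le hc₁ j).trans hs.le)) hδ₀.le).trans
      (rpow_apply_deGiorgiLevel_le hB₀ hδ₀.le hs₀ hnonneg hrec hstart j)
  have hlim : Filter.Tendsto (fun j : ℕ => c ^ j / (2 * B₀)) Filter.atTop (nhds 0) := by
    simpa using (tendsto_pow_atTop_nhds_zero_of_lt_one hc₀.le hc₁).div_const (2 * B₀)
  have hzero : φ s ^ δ₀ = 0 := le_antisymm (ge_of_tendsto' hlim hbound) (Real.rpow_nonneg hφs δ₀)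
  exact (Real.rpow_eq_zero hφs hδ₀.ne').mp hzero

/-- Quantitative De Giorgi iteration lemma: if `φ : (0,∞) → [0,∞)` is nonincreasing,
right-continuous, satisfies `r·φ(s+r) ≤ B₀·φ(s)^(1+δ₀)` for all `s > 0`, `r ∈ [0,1]`,
and `φ(s₀)^δ₀ ≤ 1/(2B₀)` at some level `s₀ > 0`, then `φ(s) = 0` for all
`s > s₀ + 1/(1 - 2^(-δ₀))`. -/
theorem deGiorgi_iteration_quantitative (φ : ℝ → ℝ) (B₀ δ₀ s₀ : ℝ)
    (hB₀ : 0 < B₀) (hδ₀ : 0 < δ₀) (hs₀ : 0 < s₀)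
    (hnonneg : ∀ s : ℝ, 0 < s → 0 ≤ φ s)
    (hmono : ∀ s t : ℝ, 0 < s → s ≤ t → φ t ≤ φ s)
    (hrc : ∀ s : ℝ, 0 < s → ContinuousWithinAt φ (Set.Ici s) s)
    (hrec : ∀ s r : ℝ, 0 < s → 0 ≤ r → r ≤ 1 →
      r * φ (s + r) ≤ B₀ * φ s ^ (1 + δ₀))
    (hstart : φ s₀ ^ δ₀ ≤ 1 / (2 * B₀)) :
    ∀ s : ℝ, s₀ + 1 / (1 - (2 : ℝ) ^ (-δ₀)) < s → φ s = 0 :=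
  deGiorgi_iteration_quantitative_general φ B₀ δ₀ s₀ hB₀ hδ₀ hs₀ hnonneg hmono hrec hstart
end

section
/- Let Γ ⊂ ℝⁿ be an open convex cone containing the positive octant Γₙ = {λ ∈ ℝⁿ : λ₁ > 0, …, λₙ > 0}, and let f : Γ → (0,∞) be concave, differentiable, positively homogeneous of degree one (f(rλ) = r·f(λ) for all r > 0, λ ∈ Γ), with ∂f(λ)/∂λⱼ > 0 for every λ ∈ Γ and every j. Assume there is γ > 0 such that f(μ) ≥ n·γ^{1/n}·(∏_{j=1}^n μⱼ)^{1/n} for all μ ∈ Γₙ. Then ∏_{j=1}^n ∂f(λ)/∂λⱼ ≥ γ for every λ ∈ Γ. -/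
/-!
Concavity bounds `f` by its tangent plane at `λ`, and Euler's identity `Df(λ) λ = f(λ)` for
degree-one homogeneous `f` removes the constant term, so `f ≤ Df(λ)` on `Γ`. At the point
`μ = (1 / ∂ⱼf(λ))ⱼ` of the positive octant the right side equals `n`, and the assumed lower
bound turns into `n γ^(1/n) (∏ⱼ ∂ⱼf(λ))^(-1/n) ≤ n`.
-/

theorem ConcaveOn.le_add_fderiv {E : Type*} [NormedAddCommGroup E] [NormedSpace ℝ E]
    {s : Set E} {f : E → ℝ} (hf : ConcaveOn ℝ s f) {x y : E} (hx : x ∈ s) (hy : y ∈ s)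
    (hfx : DifferentiableAt ℝ f x) :
    f y ≤ f x + fderiv ℝ f x (y - x) := by
  set g : ℝ →ᵃ[ℝ] E := AffineMap.lineMap x y
  have hderiv : HasDerivAt (f ∘ g) (fderiv ℝ f x (y - x)) 0 := by
    have : HasFDerivAt f (fderiv ℝ f x) (g 0) := by simpa [g] using hfx.hasFDerivAt
    exact this.comp_hasDerivAt 0 AffineMap.hasDerivAt_lineMap
  have := (hf.comp_affineMap g).slope_le_of_hasDerivAt (by simpa [g]) (by simpa [g])
    zero_lt_one hderiv
  simp only [slope_def_field, Function.comp_apply, AffineMap.lineMap_apply_one,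
    AffineMap.lineMap_apply_zero, sub_zero, div_one, g] at this
  linarith

theorem fderiv_apply_self_of_homogeneous {E F : Type*} [NormedAddCommGroup E] [NormedSpace ℝ E]
    [NormedAddCommGroup F] [NormedSpace ℝ F] {f : E → F} {x : E}
    (hfx : DifferentiableAt ℝ f x) (hhom : ∀ r : ℝ, 0 < r → f (r • x) = r • f x) :
    fderiv ℝ f x x = f x := by
  have hray : HasDerivAt (fun r : ℝ => f (r • x)) (fderiv ℝ f x x) 1 := by
    have : HasFDerivAt f (fderiv ℝ f x) ((1 : ℝ) • x) := by simpa using hfx.hasFDerivAt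
    simpa [Function.comp_def] using
      this.comp_hasDerivAt (x := (1 : ℝ)) ((hasDerivAt_id (1 : ℝ)).smul_const x)
  have hlin : HasDerivAt (fun r : ℝ => f (r • x)) (f x) 1 := by
    have : HasDerivAt (fun r : ℝ => r • f x) (f x) 1 := by
      simpa using (hasDerivAt_id (1 : ℝ)).smul_const (f x)
    refine this.congr_of_eventuallyEq ?_
    filter_upwards [lt_mem_nhds one_pos] with r hr using hhom r hr
  exact hray.unique hlin

theorem ConcaveOn.le_fderiv_of_homogeneous {E : Type*} [NormedAddCommGroup E] [NormedSpace ℝ E]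
    {s : Set E} {f : E → ℝ} (hf : ConcaveOn ℝ s f) {x y : E} (hx : x ∈ s) (hy : y ∈ s)
    (hfx : DifferentiableAt ℝ f x) (hhom : ∀ r : ℝ, 0 < r → f (r • x) = r * f x) :
    f y ≤ fderiv ℝ f x y := by
  have heuler := fderiv_apply_self_of_homogeneous hfx hhom
  have := hf.le_add_fderiv hx hy hfx
  rw [map_sub, heuler] at this
  linarith

theorem ContinuousLinearMap.apply_eq_sum_mul_single {ι : Type*} [Fintype ι] [DecidableEq ι]
    (D : (ι → ℝ) →L[ℝ] ℝ) (μ : ι → ℝ) :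
    D μ = ∑ j, μ j * D (Pi.single j 1) := by
  conv_lhs => rw [pi_eq_sum_univ' μ]
  simp only [map_sum, map_smul, smul_eq_mul]

theorem le_of_rpow_mul_inv_rpow_le_one {γ A p : ℝ} (hγ : 0 ≤ γ) (hA : 0 < A) (hp : 0 < p)
    (h : γ ^ p * A⁻¹ ^ p ≤ 1) : γ ≤ A := by
  rw [← Real.mul_rpow hγ (inv_nonneg.2 hA.le)] at h
  have : γ * A⁻¹ ≤ 1 := by
    by_contra! hlt
    exact (Real.one_lt_rpow hlt hp).not_ge h
  rwa [← div_eq_mul_inv, div_le_one hA] at this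

theorem structural_condition_general (n : ℕ) (hn : 0 < n)
    (Γ : Set (Fin n → ℝ))
    (hΓoct : ∀ μ : Fin n → ℝ, (∀ j, 0 < μ j) → μ ∈ Γ)
    (f : (Fin n → ℝ) → ℝ)
    (hconc : ConcaveOn ℝ Γ f)
    (hdiff : ∀ l ∈ Γ, DifferentiableAt ℝ f l)
    (hhom : ∀ l ∈ Γ, ∀ r : ℝ, 0 < r → f (r • l) = r * f l)
    (hderiv : ∀ l ∈ Γ, ∀ j : Fin n, 0 < fderiv ℝ f l (Pi.single j 1))
    (γ : ℝ) (hγ : 0 < γ)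
    (hlow : ∀ μ : Fin n → ℝ, (∀ j, 0 < μ j) →
      (n : ℝ) * γ ^ ((1 : ℝ) / n) * (∏ j, μ j) ^ ((1 : ℝ) / n) ≤ f μ) :
    ∀ l ∈ Γ, γ ≤ ∏ j, fderiv ℝ f l (Pi.single j 1) := by
  intro l hl
  set a : Fin n → ℝ := fun j => fderiv ℝ f l (Pi.single j 1)
  have ha : ∀ j, 0 < a j := hderiv l hl
  have hμ : ∀ j, 0 < (a j)⁻¹ := fun j => inv_pos.2 (ha j)
  have htangent : fderiv ℝ f l (fun j => (a j)⁻¹) = n := by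
    simp [ContinuousLinearMap.apply_eq_sum_mul_single _ (fun j => (a j)⁻¹),
      inv_mul_cancel₀ (ha _).ne', a]
  have hbound := (hlow _ hμ).trans <|
    (hconc.le_fderiv_of_homogeneous hl (hΓoct _ hμ) (hdiff l hl) (hhom l hl)).trans_eq htangent
  have hn' : (0 : ℝ) < n := Nat.cast_pos.2 hn
  rw [Finset.prod_inv_distrib, mul_assoc, mul_le_iff_le_one_right hn'] at hbound
  exact le_of_rpow_mul_inv_rpow_le_one hγ.le (Finset.prod_pos fun j _ => ha j)
    (one_div_pos.2 hn') hbound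

/-- Structural-condition lemma: if `f` is a positive, concave, differentiable,
degree-one homogeneous function with positive partial derivatives on an open convex
cone `Γ` containing the positive octant, and `f(μ) ≥ n·γ^(1/n)·(∏ μⱼ)^(1/n)` on the
positive octant, then `∏ⱼ ∂f/∂λⱼ ≥ γ` on all of `Γ`. -/
theorem structural_condition (n : ℕ) (hn : 0 < n)
    (Γ : Set (Fin n → ℝ)) (hΓopen : IsOpen Γ) (hΓconvex : Convex ℝ Γ)
    (hΓcone : ∀ l ∈ Γ, ∀ r : ℝ, 0 < r → r • l ∈ Γ)
    (hΓoct : ∀ μ : Fin n → ℝ, (∀ j, 0 < μ j) → μ ∈ Γ)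
    (f : (Fin n → ℝ) → ℝ)
    (hfpos : ∀ l ∈ Γ, 0 < f l)
    (hconc : ConcaveOn ℝ Γ f)
    (hdiff : ∀ l ∈ Γ, DifferentiableAt ℝ f l)
    (hhom : ∀ l ∈ Γ, ∀ r : ℝ, 0 < r → f (r • l) = r * f l)
    (hderiv : ∀ l ∈ Γ, ∀ j : Fin n, 0 < fderiv ℝ f l (Pi.single j 1))
    (γ : ℝ) (hγ : 0 < γ)
    (hlow : ∀ μ : Fin n → ℝ, (∀ j, 0 < μ j) →
      (n : ℝ) * γ ^ ((1 : ℝ) / n) * (∏ j, μ j) ^ ((1 : ℝ) / n) ≤ f μ) :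
    ∀ l ∈ Γ, γ ≤ ∏ j, fderiv ℝ f l (Pi.single j 1) :=
  structural_condition_general n hn Γ hΓoct f hconc hdiff hhom hderiv γ hγ hlow
end

section
/- For every real p ≥ 1 and all real numbers x ≥ 0 and v ≥ 0: v^p·x ≤ x·(log(1+x))^p + (p/e)^p·e^{2v}. -/
lemma rpow_le_exp_aux (p v : ℝ) (hp : 1 ≤ p) (hv : 0 ≤ v) :
    v ^ p ≤ (p / Real.exp 1) ^ p * Real.exp v := by
  have hp0 : 0 < p := lt_of_lt_of_le one_pos hp
  have key : v ≤ p * Real.exp (v / p - 1) := by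
    have h := Real.add_one_le_exp (v / p - 1)
    have : v / p ≤ Real.exp (v / p - 1) := by linarith
    calc v = p * (v / p) := by field_simp
      _ ≤ p * Real.exp (v / p - 1) := by
          exact mul_le_mul_of_nonneg_left this hp0.le
  have h1 : v ^ p ≤ (p * Real.exp (v / p - 1)) ^ p :=
    Real.rpow_le_rpow hv key hp0.le
  have h2 : (p * Real.exp (v / p - 1)) ^ p
      = (p / Real.exp 1) ^ p * Real.exp v := by
    rw [Real.mul_rpow hp0.le (Real.exp_pos _).le,
      ← Real.exp_one_rpow (v / p - 1), ← Real.rpow_mul (Real.exp_pos 1).le]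
    rw [Real.div_rpow hp0.le (Real.exp_pos 1).le]
    rw [Real.exp_one_rpow, Real.exp_one_rpow]
    rw [div_mul_eq_mul_div, mul_comm (v / p - 1) p]
    rw [mul_sub, mul_div_cancel₀ _ hp0.ne', mul_one, Real.exp_sub]
    ring
  linarith
  
/-- Generalized Young inequality used in the paper:
`v^p·x ≤ x·(log(1+x))^p + (p/e)^p·e^(2v)` for `p ≥ 1`, `x ≥ 0`, `v ≥ 0`. -/
theorem generalized_young (p x v : ℝ) (hp : 1 ≤ p) (hx : 0 ≤ x) (hv : 0 ≤ v) :
    v ^ p * x ≤ x * (Real.log (1 + x)) ^ p +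
      (p / Real.exp 1) ^ p * Real.exp (2 * v) := by
  have hp0 : 0 < p := lt_of_lt_of_le one_pos hp
  have hlog : 0 ≤ Real.log (1 + x) := Real.log_nonneg (by linarith)
  have hc : 0 ≤ (p / Real.exp 1) ^ p :=
    Real.rpow_nonneg (div_nonneg hp0.le (Real.exp_pos 1).le) p
  rcases le_or_gt v (Real.log (1 + x)) with h | h
  · have h1 : v ^ p ≤ (Real.log (1 + x)) ^ p := Real.rpow_le_rpow hv h hp0.le
    have h2 := mul_le_mul_of_nonneg_right h1 hx
    have h3 : 0 ≤ (p / Real.exp 1) ^ p * Real.exp (2 * v) :=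
      mul_nonneg hc (Real.exp_pos _).le
    nlinarith
  · have hxle : x ≤ Real.exp v := by
      have := Real.exp_log (show (0:ℝ) < 1 + x by linarith)
      nlinarith [Real.exp_lt_exp.mpr h, this]
    have h1 : v ^ p * x ≤ v ^ p * Real.exp v :=
      mul_le_mul_of_nonneg_left hxle (Real.rpow_nonneg hv p)
    have h2 : v ^ p * Real.exp v ≤ (p / Real.exp 1) ^ p * Real.exp v * Real.exp v :=
      mul_le_mul_of_nonneg_right (rpow_le_exp_aux p v hp hv) (Real.exp_pos _).le
    have h3 : Real.exp v * Real.exp v = Real.exp (2 * v) := by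
      rw [← Real.exp_add]; ring_nf
    have h4 : 0 ≤ x * Real.log (1 + x) ^ p :=
      mul_nonneg hx (Real.rpow_nonneg hlog p)
    nlinarith
end

section
/- Let (X, μ) be a measure space with total mass μ(X) = V ∈ (0,∞), let F : X → ℝ be measurable, and let k, n be real numbers with 0 < k ≤ n, q > 1, M > 0. Assume ∫_X e^{nF} dμ = V and ∫_X e^{qnF} dμ ≤ M^q. Then ∫_X e^{kF} dμ ≥ min( V/2, (V/(2M))^{q/(q−1)} ). -/
/-!
Split `X` at `B = {F > 0}`. Off `B` we have `e^{kF} ≥ e^{nF}`, and on `B` we have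
`e^{kF} ≥ 1`, so `∫ e^{kF} ≥ ∫_{Bᶜ} e^{nF} + μ(B)`. Either `∫_{Bᶜ} e^{nF} ≥ V/2`, or
`∫_B e^{nF} ≥ V/2`, and then Hölder's inequality with the `L^q` bound gives
`V/2 ≤ M μ(B)^{(q-1)/q}`.
-/

open MeasureTheory ENNReal

theorem min_le_of_add_eq_of_le_mul_rpow {V M p a b m I : ℝ} (hp : 0 < p) (hM : 0 < M)
    (ha₀ : 0 ≤ a) (hb₀ : 0 ≤ b) (hm : 0 ≤ m) (hab : a + b = V) (hb : b ≤ M * m ^ p⁻¹)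
    (hI : a + m ≤ I) :
    min (V / 2) ((V / (2 * M)) ^ p) ≤ I := by
  rcases le_or_gt (V / 2) a with ha | ha
  · exact (min_le_left _ _).trans (by linarith)
  · have hVm : V / (2 * M) ≤ m ^ p⁻¹ := by
      rw [div_le_iff₀ (by positivity)]
      linarith
    have hV : 0 ≤ V / (2 * M) := by rw [← hab]; positivity
    calc min (V / 2) ((V / (2 * M)) ^ p)
        ≤ (m ^ p⁻¹) ^ p := (min_le_right _ _).trans (by gcongr)
      _ = m := Real.rpow_inv_rpow hm hp.ne'
      _ ≤ I := by linarith

section Holder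

variable {X : Type*} [MeasurableSpace X] {μ : Measure X}

theorem setIntegral_le_mul_measureReal_rpow {p q M : ℝ} (hpq : p.HolderConjugate q) (hM : 0 ≤ M)
    {f : X → ℝ} (hf₀ : ∀ x, 0 ≤ f x) (hfm : AEStronglyMeasurable f μ)
    (hfp : Integrable (fun x => f x ^ p) μ) (hfM : ∫ x, f x ^ p ∂μ ≤ M ^ p)
    {s : Set X} (hs : μ s ≠ ∞) :
    ∫ x in s, f x ∂μ ≤ M * μ.real s ^ q⁻¹ := by
  have hfLp : MemLp f (ENNReal.ofReal p) μ := by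
    refine (integrable_norm_rpow_iff hfm (by simpa using hpq.pos) ofReal_ne_top).1 ?_
    simpa only [Real.norm_of_nonneg (hf₀ _), ENNReal.toReal_ofReal hpq.nonneg] using hfp
  have : IsFiniteMeasure (μ.restrict s) := isFiniteMeasure_restrict.2 hs
  have hHolder := integral_mul_le_Lp_mul_Lq_of_nonneg (μ := μ.restrict s) hpq
    (ae_of_all _ hf₀) (ae_of_all _ fun _ => zero_le_one) (hfLp.restrict s) (memLp_const 1)
  simp only [mul_one, Real.one_rpow, setIntegral_const, smul_eq_mul, one_div] at hHolder
  calc ∫ x in s, f x ∂μ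
      ≤ (∫ x in s, f x ^ p ∂μ) ^ p⁻¹ * μ.real s ^ q⁻¹ := hHolder
    _ ≤ (M ^ p) ^ p⁻¹ * μ.real s ^ q⁻¹ := by
      gcongr
      · exact integral_nonneg fun x => Real.rpow_nonneg (hf₀ x) p
      · exact inv_nonneg.2 hpq.nonneg
      exact (setIntegral_le_integral hfp
        (ae_of_all _ fun x => Real.rpow_nonneg (hf₀ x) p)).trans hfM
    _ = M * μ.real s ^ q⁻¹ := by rw [Real.rpow_rpow_inv hM hpq.ne_zero]

end Holder

theorem lower_bound_exp_kF_general {X : Type*} [MeasurableSpace X] (μ : Measure X)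
    (F : X → ℝ) (hF : Measurable F)
    (k n q M V : ℝ) (hk : 0 < k) (hkn : k ≤ n) (hq : 1 < q) (hM : 0 < M)
    (hint_n : Integrable (fun x => Real.exp (n * F x)) μ)
    (hint_qn : Integrable (fun x => Real.exp (q * n * F x)) μ)
    (hint_k : Integrable (fun x => Real.exp (k * F x)) μ)
    (hnorm : ∫ x, Real.exp (n * F x) ∂μ = V)
    (hLq : ∫ x, Real.exp (q * n * F x) ∂μ ≤ M ^ q) :
    min (V / 2) ((V / (2 * M)) ^ (q / (q - 1))) ≤ ∫ x, Real.exp (k * F x) ∂μ := by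
  have hqp : q.HolderConjugate (q / (q - 1)) := .conjExponent hq
  set B := {x | 0 < F x}
  have hB : MeasurableSet B := measurableSet_lt measurable_const hF
  have hexp_one_le : ∀ x ∈ B, 1 ≤ Real.exp (k * F x) := fun x hx =>
    Real.one_le_exp (mul_pos hk hx).le
  have hB_fin : μ B ≠ ∞ := by
    refine ((hint_k.measure_norm_ge_lt_top one_pos).trans_le' (measure_mono fun x hx => ?_)).ne
    simpa only [Set.mem_ofPred_eq, Real.norm_of_nonneg (Real.exp_pos _).le] using hexp_one_le x hx
  have hoff_B : ∫ x in Bᶜ, Real.exp (n * F x) ∂μ ≤ ∫ x in Bᶜ, Real.exp (k * F x) ∂μ :=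
    setIntegral_mono_on hint_n.integrableOn hint_k.integrableOn hB.compl fun x hx =>
      Real.exp_le_exp.2 (mul_le_mul_of_nonpos_right hkn (not_lt.1 hx))
  have hon_B : μ.real B ≤ ∫ x in B, Real.exp (k * F x) ∂μ := by
    simpa using setIntegral_mono_on (integrableOn_const hB_fin) hint_k.integrableOn hB hexp_one_le
  have hpow : ∀ x, Real.exp (n * F x) ^ q = Real.exp (q * n * F x) := fun x => by
    rw [← Real.exp_mul]; ring_nf
  have hHolder : ∫ x in B, Real.exp (n * F x) ∂μ ≤ M * μ.real B ^ (q / (q - 1))⁻¹ :=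
    setIntegral_le_mul_measureReal_rpow hqp hM.le (fun _ => (Real.exp_pos _).le)
      (hF.const_mul n).exp.aestronglyMeasurable (by simpa only [hpow] using hint_qn)
      (by simpa only [hpow] using hLq) hB_fin
  refine min_le_of_add_eq_of_le_mul_rpow hqp.symm.pos hM
    (setIntegral_nonneg hB.compl fun _ _ => (Real.exp_pos _).le)
    (setIntegral_nonneg hB fun _ _ => (Real.exp_pos _).le) measureReal_nonneg
    ((add_comm _ _).trans (integral_add_compl hB hint_n) |>.trans hnorm) hHolder ?_
  rw [← integral_add_compl hB hint_k]
  linarith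

/-- Lower bound on `∫ e^(kF)` from the normalization `∫ e^(nF) = V` and the `L^q`
bound `∫ e^(qnF) ≤ M^q`, for `0 < k ≤ n` and `q > 1`. -/
theorem lower_bound_exp_kF {X : Type*} [MeasurableSpace X] (μ : Measure X)
    (F : X → ℝ) (hF : Measurable F)
    (k n q M V : ℝ) (hk : 0 < k) (hkn : k ≤ n) (hq : 1 < q) (hM : 0 < M)
    (hV : 0 < V) (hμV : μ Set.univ = ENNReal.ofReal V)
    (hint_n : Integrable (fun x => Real.exp (n * F x)) μ)
    (hint_qn : Integrable (fun x => Real.exp (q * n * F x)) μ)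
    (hint_k : Integrable (fun x => Real.exp (k * F x)) μ)
    (hnorm : ∫ x, Real.exp (n * F x) ∂μ = V)
    (hLq : ∫ x, Real.exp (q * n * F x) ∂μ ≤ M ^ q) :
    min (V / 2) ((V / (2 * M)) ^ (q / (q - 1))) ≤ ∫ x, Real.exp (k * F x) ∂μ :=
  lower_bound_exp_kF_general μ F hF k n q M V hk hkn hq hM hint_n hint_qn hint_k hnorm hLq
end
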